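/- arXiv:1807.01538 — 7 statements merged into one kernel-verified Lean document; each statement's English description precedes it below -/
import Mathlib

section
/- Let n ≥ 1 be an integer, s₀ > 0, α ∈ (−π/2, π/2), and η′ > 0. Define I_n(τ) = ∫₀^{η′} r^{(2n−1)/2} (r − s₀·conj(z_α))^{−2} · exp( iτ/(r − s₀·conj(z_α)) ) dr (an integral of a complex-valued function over the real interval (0, η′)). Then lim_{τ→∞} τ^{(2n+1)/2} · e^{−τ/(2s₀)} · e^{−iτ cos α/(2s₀(1+sin α))} · I_n(τ) = −i · s₀^{2n−1} · 2^{(2n−1)/2} · (1+sin α)^{(2n−1)/2} · e^{i(2n−1)α/2} · Γ((2n+1)/2). -/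
open Real Filter MeasureTheory Set


lemma integrableOn_aux (s b : ℝ) (hs : -1 < s) (hb : 0 < b) :
    IntegrableOn (fun u : ℝ => u ^ s * Real.exp (-(b * u))) (Ioi 0) := by
  have := integrableOn_rpow_mul_exp_neg_mul_rpow (p := 1) (s := s) (b := b) hs zero_lt_one hb
  simpa [Real.rpow_one] using this

lemma meas_aux (p : ℝ) (hp : 0 < p) (z : ℂ) :
    Continuous (fun u : ℝ => ((u ^ p : ℝ) : ℂ) * Complex.exp (-(z * u))) :=
  (Complex.continuous_ofReal.comp (Real.continuous_rpow_const hp.le)).mul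
    (Complex.continuous_exp.comp ((continuous_const.mul Complex.continuous_ofReal).neg))

lemma norm_aux (p : ℝ) (z : ℂ) (u : ℝ) (hu : 0 < u) :
    ‖((u ^ p : ℝ) : ℂ) * Complex.exp (-(z * u))‖ = u ^ p * Real.exp (-(z.re * u)) := by
  rw [norm_mul, Complex.norm_real, Real.norm_eq_abs,
    Complex.norm_exp, abs_of_nonneg (Real.rpow_nonneg hu.le p)]
  congr 1
  simp [Complex.mul_re]

lemma int_aux (p : ℝ) (hp : 0 < p) (z : ℂ) (hz : 0 < z.re) :
    IntegrableOn (fun u : ℝ => ((u ^ p : ℝ) : ℂ) * Complex.exp (-(z * u))) (Ioi 0) := by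
  refine Integrable.mono' (integrableOn_aux p z.re (by linarith) hz)
    (meas_aux p hp z).aestronglyMeasurable ?_
  filter_upwards [ae_restrict_mem measurableSet_Ioi] with u hu
  exact le_of_eq (norm_aux p z u hu)

lemma gammaA (p : ℝ) (hp : 0 < p) (c : ℂ) (hc : 0 < c.re) :
    ∫ u in Ioi (0:ℝ), ((u ^ p : ℝ) : ℂ) * Complex.exp (-(c * u)) =
      Complex.Gamma ((p:ℂ)+1) * c ^ (-((p:ℂ)+1)) := by
  set U : Set ℂ := {z | 0 < z.re} with hU
  have hUo : IsOpen U := isOpen_lt continuous_const Complex.continuous_re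
  have hUc : Convex ℝ U := convex_halfSpace_re_gt 0
  set f : ℂ → ℂ := fun z => ∫ u in Ioi (0:ℝ), ((u ^ p : ℝ) : ℂ) * Complex.exp (-(z * u)) with hf
  set g : ℂ → ℂ := fun z => Complex.Gamma ((p:ℂ)+1) * z ^ (-((p:ℂ)+1)) with hg
  have hfd : DifferentiableOn ℂ f U := by
    intro z hz
    have hz' : 0 < z.re := hz
    set ε : ℝ := z.re / 2 with hε
    have hε0 : 0 < ε := by positivity
    have key := hasDerivAt_integral_of_dominated_loc_of_deriv_le
      (μ := volume.restrict (Ioi (0:ℝ)))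
      (F := fun (w : ℂ) (u : ℝ) => ((u ^ p : ℝ) : ℂ) * Complex.exp (-(w * u)))
      (F' := fun (w : ℂ) (u : ℝ) => -(u:ℂ) * (((u ^ p : ℝ) : ℂ) * Complex.exp (-(w * u))))
      (bound := fun u : ℝ => u ^ (p+1) * Real.exp (-(ε * u))) (x₀ := z) (s := Metric.ball z ε) (Metric.ball_mem_nhds z hε0)
      (Eventually.of_forall fun w => (meas_aux p hp w).aestronglyMeasurable)
      (int_aux p hp z hz')
      (((Complex.continuous_ofReal.neg).mul (meas_aux p hp z)).aestronglyMeasurable)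
      ?_ ?_ ?_
    · exact key.2.differentiableAt.differentiableWithinAt
    · -- bound
      filter_upwards [ae_restrict_mem measurableSet_Ioi] with u hu w hw
      have hwre : ε ≤ w.re := by
        have h1 : |w.re - z.re| ≤ ‖w - z‖ := by
          simpa using Complex.abs_re_le_norm (w - z)
        have h2 : ‖w - z‖ < ε := by
          rwa [Metric.mem_ball, Complex.dist_eq] at hw
        have := abs_le.mp h1
        have := this.1
        linarith
      rw [norm_mul, norm_neg, Complex.norm_real, Real.norm_eq_abs,
        abs_of_nonneg (le_of_lt hu), norm_aux p w u hu]
      have h3 : u ^ (p+1) = u * u ^ p := by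
        rw [Real.rpow_add_one (ne_of_gt hu)]; ring
      rw [h3, mul_assoc]
      have h4 : Real.exp (-(w.re * u)) ≤ Real.exp (-(ε * u)) := by
        apply Real.exp_le_exp.2
        have := mul_le_mul_of_nonneg_right hwre hu.le
        linarith
      have h5 : 0 ≤ u ^ p := Real.rpow_nonneg hu.le p
      exact mul_le_mul_of_nonneg_left (mul_le_mul_of_nonneg_left h4 h5) hu.le
    · -- bound integrable
      exact integrableOn_aux (p+1) ε (by linarith) hε0
    · -- differentiability
      filter_upwards [] with u w _
      have h1 : HasDerivAt (fun w : ℂ => -(w * u)) (-(u:ℂ)) w := by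
        have h0 := ((hasDerivAt_id w).mul_const (u:ℂ)).neg
        simp only [id, one_mul] at h0
        exact h0
      have h2 := h1.cexp.const_mul ((u ^ p : ℝ) : ℂ)
      exact h2.congr_deriv (by ring)
  have hgd : DifferentiableOn ℂ g U := by
    intro z hz
    have hz' : 0 < z.re := hz
    apply DifferentiableAt.differentiableWithinAt
    exact (differentiableAt_id.cpow (differentiableAt_const _) (Or.inl hz')).const_mul _
  have key : ∀ r : ℝ, 0 < r → f r = g r := by
    intro r hr
    have h1 := Complex.integral_cpow_mul_exp_neg_mul_Ioi
      (a := (p:ℂ)+1) (r := r)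
      (by simp only [Complex.add_re, Complex.ofReal_re, Complex.one_re]; linarith) hr
    have h2 : ∀ t ∈ Ioi (0:ℝ),
        ((t ^ p : ℝ) : ℂ) * Complex.exp (-((r:ℂ) * t)) =
          (t:ℂ) ^ ((p:ℂ)+1-1) * Complex.exp (-((r:ℂ) * t)) := by
      intro t ht
      rw [mem_Ioi] at ht
      congr 1
      rw [add_sub_cancel_right, Complex.ofReal_cpow ht.le]
    have h3 : f r = (1/(r:ℂ)) ^ ((p:ℂ)+1) * Complex.Gamma ((p:ℂ)+1) := by
      simp only [hf]
      exact (setIntegral_congr_fun measurableSet_Ioi h2).trans h1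
    rw [h3, hg, mul_comm]
    congr 1
    rw [one_div, Complex.cpow_neg, Complex.inv_cpow]
    rw [Complex.arg_ofReal_of_nonneg hr.le]
    exact Real.pi_ne_zero.symm
  have hfreq : ∃ᶠ z in nhdsWithin (1:ℂ) {(1:ℂ)}ᶜ, f z = g z := by
    have htend : Tendsto (fun k : ℕ => (((1:ℝ) + ((k:ℝ)+1)⁻¹ : ℝ) : ℂ)) atTop
        (nhdsWithin (1:ℂ) {(1:ℂ)}ᶜ) := by
      rw [tendsto_nhdsWithin_iff]
      constructor
      · have hr : Tendsto (fun k : ℕ => (1:ℝ) + ((k:ℝ)+1)⁻¹) atTop (nhds 1) := by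
          have := tendsto_one_div_add_atTop_nhds_zero_nat (𝕜 := ℝ)
          simp only [one_div] at this
          simpa using tendsto_const_nhds.add this
        have h2 := (Complex.continuous_ofReal.tendsto 1).comp hr
        simp only [Function.comp_def] at h2
        simpa using h2
      · filter_upwards [] with k
        simp only [Set.mem_compl_iff, Set.mem_singleton_iff]
        intro h
        rw [show (1:ℂ) = ((1:ℝ):ℂ) by norm_num] at h
        have := Complex.ofReal_injective h
        have hk : (0:ℝ) < ((k:ℝ)+1)⁻¹ := by positivity
        linarith
    exact htend.frequently (Frequently.of_forall fun k => key _ (by positivity))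
  have heq := (hfd.analyticOnNhd hUo).eqOn_of_preconnected_of_frequently_eq
    (hgd.analyticOnNhd hUo) hUc.isPreconnected
    (show (1:ℂ) ∈ U by simp [hU]) hfreq
  exact heq (show c ∈ U from hc)

/-- `conj(z_α)` where `z_α = -cos α + i(1 + sin α)`. -/
noncomputable def zbar (α : ℝ) : ℂ :=
  (starRingEnd ℂ) (-(Real.cos α : ℂ) + Complex.I * ((1 + Real.sin α : ℝ) : ℂ))

set_option maxHeartbeats 1000000 in
theorem stmt_0 (n : ℕ) (hn : 1 ≤ n) (s₀ : ℝ) (hs₀ : 0 < s₀) (α : ℝ)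
    (hα : α ∈ Set.Ioo (-(π/2)) (π/2)) (η' : ℝ) (hη' : 0 < η') :
    Tendsto (fun τ : ℝ =>
        ((τ ^ ((2*(n:ℝ)+1)/2) * Real.exp (-τ/(2*s₀)) : ℝ) : ℂ) *
        Complex.exp (-Complex.I * (τ : ℂ) * (Real.cos α : ℂ) /
          ((2*s₀*(1+Real.sin α) : ℝ) : ℂ)) *
        ∫ r in Set.Ioo (0:ℝ) η',
          ((r ^ ((2*(n:ℝ)-1)/2) : ℝ) : ℂ) * (((r : ℂ) - (s₀ : ℂ) * zbar α) ^ 2)⁻¹ *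
            Complex.exp (Complex.I * (τ : ℂ) / ((r : ℂ) - (s₀ : ℂ) * zbar α)))
      atTop
      (nhds (-Complex.I * ((s₀ ^ (2*n-1) : ℝ) : ℂ) *
        (((2:ℝ) ^ ((2*(n:ℝ)-1)/2) : ℝ) : ℂ) *
        (((1+Real.sin α) ^ ((2*(n:ℝ)-1)/2) : ℝ) : ℂ) *
        Complex.exp (Complex.I * (((2*(n:ℝ)-1)*α/2 : ℝ) : ℂ)) *
        ((Real.Gamma ((2*(n:ℝ)+1)/2) : ℝ) : ℂ))) := by
  obtain ⟨hα1, hα2⟩ := hα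
  have hπ := Real.pi_pos
  have hcos : 0 < Real.cos α := Real.cos_pos_of_mem_Ioo ⟨hα1, hα2⟩
  have hsin1 : -1 < Real.sin α := by
    nlinarith [Real.neg_one_le_sin α, Real.sin_sq_add_cos_sq α, Real.sin_le_one α]
  have hsin : 0 < 1 + Real.sin α := by linarith
  set p : ℝ := (2*(n:ℝ)-1)/2 with hp_def
  have hn1 : (1:ℝ) ≤ (n:ℝ) := by exact_mod_cast hn
  have hp : 0 < p := by rw [hp_def]; linarith
  set b : ℂ := (s₀:ℂ) * zbar α with hb_def
  have hb_eq : b = ((-(s₀ * Real.cos α) : ℝ) : ℂ) + ((-(s₀ * (1 + Real.sin α)) : ℝ) : ℂ) * Complex.I := by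
    rw [hb_def, zbar]
    simp only [map_add, map_mul, map_neg, Complex.conj_ofReal, Complex.conj_I]
    push_cast
    ring
  have hbim : b.im = -(s₀ * (1 + Real.sin α)) := by
    rw [hb_eq]
    simp only [Complex.add_im, Complex.mul_im, Complex.ofReal_re, Complex.ofReal_im,
      Complex.I_re, Complex.I_im]
    ring
  have hbre : b.re = -(s₀ * Real.cos α) := by
    rw [hb_eq]
    simp only [Complex.add_re, Complex.mul_re, Complex.ofReal_re, Complex.ofReal_im,
      Complex.I_re, Complex.I_im]
    ring
  have hrb : ∀ r : ℝ, ((r:ℂ) - b) ≠ 0 := by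
    intro r h
    have h2 : ((r:ℂ) - b).im = 0 := by rw [h]; simp
    rw [Complex.sub_im, Complex.ofReal_im, hbim] at h2
    nlinarith
  have hb0 : b ≠ 0 := by
    intro h
    have h2 : b.im = 0 := by rw [h]; simp
    rw [hbim] at h2; nlinarith
  set C : ℝ := 2*s₀^2*(1+Real.sin α) with hC_def
  have hC0 : 0 < C := by positivity
  have hpy : Complex.cos (α:ℂ) ^ 2 + Complex.sin (α:ℂ) ^ 2 = 1 :=
    Complex.cos_sq_add_sin_sq _
  have hb2 : b^2 = (C:ℂ) * (Complex.I * Complex.exp ((α:ℝ) * Complex.I)) := by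
    rw [hC_def, hb_eq, Complex.exp_mul_I]
    push_cast
    linear_combination (s₀:ℂ)^2 * hpy +
      ((s₀:ℂ)^2*(1+Complex.sin (α:ℂ))^2 - 2*(s₀:ℂ)^2*(Complex.sin (α:ℂ))*(1+Complex.sin (α:ℂ)))
        * Complex.I_sq
  have hb2ne : b^2 ≠ 0 := pow_ne_zero 2 hb0
  set c : ℂ := Complex.I / b^2 with hc_def
  have hcform : c = ((C⁻¹ : ℝ) : ℂ) * Complex.exp (((-α : ℝ) : ℂ) * Complex.I) := by
    rw [hc_def, hb2]
    have hE : Complex.exp (((-α : ℝ) : ℂ) * Complex.I) = (Complex.exp ((α:ℝ) * Complex.I))⁻¹ := by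
      rw [← Complex.exp_neg]; push_cast; ring_nf
    rw [hE]
    have hCne : ((C:ℝ):ℂ) ≠ 0 := Complex.ofReal_ne_zero.mpr hC0.ne'
    push_cast
    field_simp [Complex.exp_ne_zero, Complex.I_ne_zero]
  have hcre : 0 < c.re := by
    rw [hcform]
    have h1 : (((C⁻¹ : ℝ) : ℂ) * Complex.exp (((-α : ℝ) : ℂ) * Complex.I)).re
        = C⁻¹ * Real.cos (-α) := by
      rw [Complex.re_ofReal_mul, Complex.exp_ofReal_mul_I_re]
    rw [h1, Real.cos_neg]
    positivity
  have hcne : c ≠ 0 := by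
    rw [hc_def]
    exact div_ne_zero Complex.I_ne_zero hb2ne
  have hb0abs : 0 < ‖b‖ := norm_pos_iff.mpr hb0
  set A : ℝ := 2*s₀^2*(1+Real.sin α)*Real.cos α with hA_def
  have hA0 : 0 < A := by positivity
  set D : ℝ := (‖b‖)^2*(η' + ‖b‖)^2 with hD_def
  have hD0 : 0 < D := by positivity
  set ε : ℝ := A/D with hε_def
  have hε0 : 0 < ε := by positivity
  set M : ℝ := ((s₀*(1+Real.sin α))^2)⁻¹ with hM_def
  have hM0 : 0 < M := by positivity
  set K : ℝ → ℝ → ℂ := fun τ u => ((u ^ p : ℝ) : ℂ) * ((((u/τ : ℝ) : ℂ) - b)^2)⁻¹ *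
      Complex.exp (Complex.I * (u:ℂ) / (b * (((u/τ : ℝ) : ℂ) - b))) with hK_def
  set Kinf : ℝ → ℂ := fun u => ((u ^ p : ℝ) : ℂ) * (((0:ℂ) - b)^2)⁻¹ *
      Complex.exp (Complex.I * (u:ℂ) / (b * ((0:ℂ) - b))) with hKinf_def
  have h0b : ((0:ℂ) - b) ≠ 0 := by simpa using hrb 0
  -- uniform norm bound
  have hnorm : ∀ u : ℝ, 0 < u → ∀ v : ℝ, 0 ≤ v → v ≤ η' →
      ‖((u ^ p : ℝ) : ℂ) * (((v:ℂ) - b)^2)⁻¹ *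
        Complex.exp (Complex.I * (u:ℂ) / (b * ((v:ℂ) - b)))‖
        ≤ M * (u ^ p * Real.exp (-(ε*u))) := by
    intro u hu v hv0 hvη
    set w : ℂ := b * ((v:ℂ) - b) with hw_def
    have hwne : w ≠ 0 := mul_ne_zero hb0 (hrb v)
    have hnsq : 0 < Complex.normSq w := Complex.normSq_pos.mpr hwne
    have h_im : w.im ≤ -A := by
      rw [hw_def]
      simp only [Complex.mul_im, Complex.sub_re, Complex.sub_im, Complex.ofReal_re,
        Complex.ofReal_im, hbre, hbim, hA_def]
      nlinarith [mul_nonneg (mul_nonneg hs₀.le hsin.le) hv0]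
    have h_D : Complex.normSq w ≤ D := by
      have h1 : ‖((v:ℂ) - b)‖ ≤ η' + ‖b‖ := by
        calc ‖((v:ℂ) - b)‖ ≤ ‖(v:ℂ)‖ + ‖b‖ := by
              simpa using norm_sub_le ((v:ℂ)) b
          _ ≤ η' + ‖b‖ := by
              simp only [Complex.norm_real, Real.norm_eq_abs, abs_of_nonneg hv0]
              linarith
      have h2 : ‖w‖ ≤ ‖b‖ * (η' + ‖b‖) := by
        rw [hw_def, norm_mul]
        exact mul_le_mul_of_nonneg_left h1 (norm_nonneg b)
      have h3 : Complex.normSq w = (‖w‖)^2 := (Complex.sq_norm w).symm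
      rw [h3, hD_def]
      calc (‖w‖)^2 ≤ (‖b‖ * (η' + ‖b‖))^2 := by
            apply pow_le_pow_left₀ (norm_nonneg w) h2
        _ = (‖b‖)^2*(η' + ‖b‖)^2 := by ring
    have h_re : (Complex.I * (u:ℂ) / w).re = u * (w.im / Complex.normSq w) := by
      rw [Complex.div_re]
      simp only [Complex.mul_re, Complex.mul_im, Complex.I_re, Complex.I_im,
        Complex.ofReal_re, Complex.ofReal_im]
      ring
    have h_rat : w.im / Complex.normSq w ≤ -ε := by
      rw [hε_def, div_le_iff₀ hnsq]
      have h4 : A * Complex.normSq w ≤ A * D :=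
        mul_le_mul_of_nonneg_left h_D hA0.le
      have h5 : -(A/D) * Complex.normSq w = -(A * Complex.normSq w)/D := by ring
      rw [h5, le_div_iff₀ hD0]
      calc w.im * D ≤ -A * D := mul_le_mul_of_nonneg_right h_im hD0.le
        _ = -(A*D) := by ring
        _ ≤ -(A * Complex.normSq w) := neg_le_neg h4
    have h_exp : ‖Complex.exp (Complex.I * (u:ℂ) / w)‖ ≤ Real.exp (-(ε*u)) := by
      rw [Complex.norm_exp, h_re]
      apply Real.exp_le_exp.2
      calc u * (w.im / Complex.normSq w) ≤ u * (-ε) :=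
            mul_le_mul_of_nonneg_left h_rat hu.le
        _ = -(ε*u) := by ring
    have h_inv : ‖((((v:ℂ) - b)^2))⁻¹‖ ≤ M := by
      rw [norm_inv, norm_pow, hM_def]
      apply inv_anti₀ (by positivity)
      have h6 : s₀*(1+Real.sin α) ≤ ‖((v:ℂ) - b)‖ := by
        have h7 := Complex.abs_im_le_norm ((v:ℂ) - b)
        rw [Complex.sub_im, Complex.ofReal_im, hbim] at h7
        rw [abs_of_nonneg (by nlinarith)] at h7
        linarith [h7]
      calc (s₀*(1+Real.sin α))^2 ≤ (‖((v:ℂ) - b)‖)^2 := by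
            apply pow_le_pow_left₀ (by positivity) h6
        _ = ‖((v:ℂ) - b)‖ ^ 2 := rfl
    have hup : ‖(((u ^ p : ℝ)) : ℂ)‖ = u ^ p := by
      rw [Complex.norm_real, Real.norm_eq_abs, abs_of_nonneg (Real.rpow_nonneg hu.le p)]
    calc ‖((u ^ p : ℝ) : ℂ) * (((v:ℂ) - b)^2)⁻¹ *
        Complex.exp (Complex.I * (u:ℂ) / (b * ((v:ℂ) - b)))‖
        = u ^ p * ‖((((v:ℂ) - b)^2))⁻¹‖ * ‖Complex.exp (Complex.I * (u:ℂ) / w)‖ := by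
          rw [norm_mul, norm_mul, hup, hw_def]
      _ ≤ u ^ p * M * Real.exp (-(ε*u)) := by
          apply mul_le_mul (mul_le_mul_of_nonneg_left h_inv (Real.rpow_nonneg hu.le p)) h_exp
            (norm_nonneg _) (mul_nonneg (Real.rpow_nonneg hu.le p) hM0.le)
      _ = M * (u ^ p * Real.exp (-(ε*u))) := by ring
  have hKcont : ∀ τ : ℝ, Continuous (K τ) := by
    intro τ
    have h1 : Continuous fun u : ℝ => (((u/τ : ℝ)) : ℂ) - b :=
      (Complex.continuous_ofReal.comp (continuous_id.div_const τ)).sub continuous_const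
    have h2 : Continuous fun u : ℝ => ((u ^ p : ℝ) : ℂ) :=
      Complex.continuous_ofReal.comp (Real.continuous_rpow_const hp.le)
    exact (h2.mul ((h1.pow 2).inv₀ (fun u => pow_ne_zero 2 (hrb _)))).mul
      (Complex.continuous_exp.comp ((continuous_const.mul Complex.continuous_ofReal).div
        (continuous_const.mul h1) (fun u => mul_ne_zero hb0 (hrb _))))
  have hmain : Tendsto (fun τ : ℝ => ∫ u in Ioi (0:ℝ), (Ioo (0:ℝ) (τ*η')).indicator (K τ) u)
      atTop (nhds (∫ u in Ioi (0:ℝ), Kinf u)) := by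
    apply tendsto_integral_filter_of_dominated_convergence
      (bound := fun u => M * (u ^ p * Real.exp (-(ε*u))))
    · filter_upwards [] with τ
      exact ((hKcont τ).aestronglyMeasurable).indicator measurableSet_Ioo
    · filter_upwards [eventually_gt_atTop 0] with τ hτ
      filter_upwards [ae_restrict_mem measurableSet_Ioi] with u hu
      by_cases hmem : u ∈ Ioo (0:ℝ) (τ*η')
      · rw [indicator_of_mem hmem]
        have hv0 : 0 ≤ u/τ := div_nonneg (le_of_lt hmem.1) hτ.le
        have hvη : u/τ ≤ η' := by
          rw [div_le_iff₀ hτ]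
          nlinarith [hmem.2]
        exact hnorm u hmem.1 (u/τ) hv0 hvη
      · rw [indicator_of_notMem hmem]
        simp only [norm_zero]
        exact mul_nonneg hM0.le (mul_nonneg (Real.rpow_nonneg (le_of_lt (mem_Ioi.mp hu)) p)
          (Real.exp_nonneg _))
    · exact (integrableOn_aux p ε (by linarith) hε0).const_mul M
    · filter_upwards [ae_restrict_mem measurableSet_Ioi] with u hu
      have hev : ∀ᶠ τ : ℝ in atTop, (Ioo (0:ℝ) (τ*η')).indicator (K τ) u = K τ u := by
        filter_upwards [eventually_gt_atTop (u/η'), eventually_gt_atTop 0] with τ h1 h2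
        apply indicator_of_mem
        exact ⟨hu, by rwa [div_lt_iff₀ hη'] at h1⟩
      have htd : Tendsto (fun τ:ℝ => ((u/τ : ℝ) : ℂ)) atTop (nhds 0) := by
        have h3 : Tendsto (fun τ:ℝ => u/τ) atTop (nhds 0) :=
          tendsto_const_nhds.div_atTop tendsto_id
        have h4 := (Complex.continuous_ofReal.tendsto 0).comp h3
        simpa only [Function.comp_def, Complex.ofReal_zero] using h4
      have h1 : Tendsto (fun τ:ℝ => (((u/τ : ℝ) : ℂ) - b)) atTop (nhds ((0:ℂ) - b)) :=
        htd.sub_const b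
      have hKt : Tendsto (fun τ : ℝ => K τ u) atTop (nhds (Kinf u)) := by
        simp only [hK_def, hKinf_def]
        exact (tendsto_const_nhds.mul ((h1.pow 2).inv₀ (pow_ne_zero 2 h0b))).mul
          ((Complex.continuous_exp.tendsto _).comp
            (tendsto_const_nhds.div (tendsto_const_nhds.mul h1) (mul_ne_zero hb0 h0b)))
      exact hKt.congr' (Filter.EventuallyEq.symm hev)
  -- ====== prefactor identity ======
  have hs0c : (s₀:ℂ) ≠ 0 := Complex.ofReal_ne_zero.mpr hs₀.ne'
  have hd2 : ((2*s₀*(1+Real.sin α) : ℝ):ℂ) ≠ 0 :=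
    Complex.ofReal_ne_zero.mpr (ne_of_gt (by positivity))
  have hexpo : ∀ τ:ℝ, ((-τ/(2*s₀) : ℝ):ℂ) +
      -Complex.I * (τ:ℂ) * (Real.cos α:ℂ) / ((2*s₀*(1+Real.sin α):ℝ):ℂ)
      = (τ:ℂ) * Complex.I / b := by
    intro τ
    have h1 : ((-τ/(2*s₀) : ℝ):ℂ)
        = ((-τ*(1+Real.sin α) : ℝ):ℂ) / ((2*s₀*(1+Real.sin α) : ℝ):ℂ) := by
      rw [← Complex.ofReal_div]
      congr 1
      field_simp
    rw [h1, ← add_div, div_eq_div_iff hd2 hb0, hb_eq]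
    push_cast
    linear_combination (norm := (push_cast; ring1)) ((τ:ℂ)*(s₀:ℂ)*Complex.I) * hpy +
      ((τ:ℂ)*(s₀:ℂ)*Complex.cos (α:ℂ)*(1+Complex.sin (α:ℂ))) * Complex.I_sq
  have hpre : ∀ τ : ℝ, ((Real.exp (-τ/(2*s₀)) : ℝ) : ℂ) *
      Complex.exp (-Complex.I * (τ:ℂ) * (Real.cos α : ℂ) / ((2*s₀*(1+Real.sin α) : ℝ) : ℂ)) =
      Complex.exp ((τ:ℂ) * Complex.I / b) := by
    intro τ
    rw [Complex.ofReal_exp, ← Complex.exp_add]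
    congr 1
    exact hexpo τ
  have hcomb : ∀ τ r : ℝ, Complex.exp ((τ:ℂ) * Complex.I / b) *
      (((r ^ p : ℝ):ℂ) * (((r:ℂ) - b)^2)⁻¹ * Complex.exp (Complex.I * ↑τ / ((r:ℂ) - b)))
      = ((r ^ p : ℝ):ℂ) * (((r:ℂ) - b)^2)⁻¹ *
        Complex.exp (Complex.I * ↑τ * ↑r / (b * ((r:ℂ) - b))) := by
    intro τ r
    have h1 : Complex.exp ((τ:ℂ) * Complex.I / b) * Complex.exp (Complex.I * ↑τ / ((r:ℂ) - b))
        = Complex.exp (Complex.I * ↑τ * ↑r / (b * ((r:ℂ) - b))) := by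
      rw [← Complex.exp_add]
      congr 1
      field_simp [hb0, hrb r]
      ring
    calc Complex.exp ((τ:ℂ) * Complex.I / b) *
          (((r ^ p : ℝ):ℂ) * (((r:ℂ) - b)^2)⁻¹ * Complex.exp (Complex.I * ↑τ / ((r:ℂ) - b)))
        = ((r ^ p : ℝ):ℂ) * (((r:ℂ) - b)^2)⁻¹ *
          (Complex.exp ((τ:ℂ) * Complex.I / b) * Complex.exp (Complex.I * ↑τ / ((r:ℂ) - b))) := by
          ring
      _ = _ := by rw [h1]
  -- ====== value of the limit integral ======
  have hval : ∫ u in Ioi (0:ℝ), Kinf u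
      = (((0:ℂ)-b)^2)⁻¹ * (Complex.Gamma ((p:ℂ)+1) * c ^ (-((p:ℂ)+1))) := by
    have hcong : ∀ u ∈ Ioi (0:ℝ), Kinf u
        = (((0:ℂ)-b)^2)⁻¹ * (((u ^ p : ℝ):ℂ) * Complex.exp (-(c * ↑u))) := by
      intro u hu
      simp only [hKinf_def]
      have harg : Complex.I * (u:ℂ) / (b * ((0:ℂ) - b)) = -(c * ↑u) := by
        have h9 : b * ((0:ℂ) - b) = -(b^2) := by ring
        rw [h9, div_neg, hc_def]
        ring
      rw [harg]
      ring
    rw [setIntegral_congr_fun measurableSet_Ioi hcong, MeasureTheory.integral_const_mul,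
      gammaA p hp c hcre]
  -- ====== the final algebraic identity ======
  have hcpow : c ^ (-((p:ℂ)+1)) = ((C ^ (p+1) : ℝ) : ℂ) * Complex.exp ((((p+1)*α : ℝ):ℂ) * Complex.I) := by
    have hcz : c = Complex.exp (((-Real.log C : ℝ):ℂ) + ((-α : ℝ):ℂ) * Complex.I) := by
      rw [hcform, Complex.exp_add, ← Complex.ofReal_exp, Real.exp_neg, Real.exp_log hC0]
    have hlog : Complex.log c = ((-Real.log C : ℝ):ℂ) + ((-α : ℝ):ℂ) * Complex.I := by
      rw [hcz, Complex.log_exp]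
      · simp only [Complex.add_im, Complex.ofReal_im, Complex.mul_im, Complex.I_im,
          Complex.I_re, Complex.ofReal_re]
        linarith
      · simp only [Complex.add_im, Complex.ofReal_im, Complex.mul_im, Complex.I_im,
          Complex.I_re, Complex.ofReal_re]
        linarith
    rw [Complex.cpow_def_of_ne_zero hcne, hlog]
    have hexp_eq : (((-Real.log C : ℝ):ℂ) + ((-α : ℝ):ℂ) * Complex.I) * (-((p:ℂ)+1))
        = (((p+1)*Real.log C : ℝ):ℂ) + (((p+1)*α : ℝ):ℂ) * Complex.I := by
      push_cast
      ring
    rw [hexp_eq, Complex.exp_add, ← Complex.ofReal_exp]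
    congr 2
    rw [Real.rpow_def_of_pos hC0]
    congr 1
    ring
  have h0bsq : ((0:ℂ)-b)^2 = (C:ℂ) * (Complex.I * Complex.exp (((α:ℝ):ℂ)*Complex.I)) := by
    rw [← hb2]
    ring
  have hGam : Complex.Gamma ((p:ℂ)+1) = ((Real.Gamma ((2*(n:ℝ)+1)/2) : ℝ) : ℂ) := by
    have h1 : ((p:ℂ)+1) = (((2*(n:ℝ)+1)/2 : ℝ):ℂ) := by rw [hp_def]; push_cast; ring
    rw [h1, Complex.Gamma_ofReal]
  have hCp : (C:ℝ) ^ (p+1) = C ^ p * C := Real.rpow_add_one hC0.ne' p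
  have h2n : ((2*n-1:ℕ):ℝ) = 2*(n:ℝ)-1 := by
    rw [Nat.cast_sub (by omega : 1 ≤ 2*n)]
    push_cast
    ring
  have hCsplit : C ^ p = 2 ^ p * (s₀ ^ (2*n-1) : ℝ) * (1+Real.sin α)^p := by
    have hs2 : ((s₀^2 : ℝ)) ^ p = s₀ ^ (2*n-1) := by
      rw [← Real.rpow_natCast s₀ 2, ← Real.rpow_mul hs₀.le,
        show ((2:ℕ):ℝ)*p = ((2*n-1:ℕ):ℝ) by rw [h2n, hp_def]; push_cast; ring,
        Real.rpow_natCast]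
    rw [hC_def, Real.mul_rpow (by positivity) hsin.le,
      Real.mul_rpow (by positivity) (by positivity : (0:ℝ) ≤ s₀^2), hs2]
  have hfinal : (((0:ℂ)-b)^2)⁻¹ * (Complex.Gamma ((p:ℂ)+1) * c ^ (-((p:ℂ)+1)))
      = -Complex.I * ((s₀ ^ (2*n-1) : ℝ) : ℂ) * (((2:ℝ) ^ p : ℝ) : ℂ) *
        (((1+Real.sin α) ^ p : ℝ) : ℂ) *
        Complex.exp (Complex.I * (((2*(n:ℝ)-1)*α/2 : ℝ) : ℂ)) *
        ((Real.Gamma ((2*(n:ℝ)+1)/2) : ℝ) : ℂ) := by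
    rw [h0bsq, hGam, hcpow, hCp, hCsplit]
    have hexp2 : Complex.exp ((((p+1)*α : ℝ):ℂ) * Complex.I)
        = Complex.exp (((α:ℝ):ℂ)*Complex.I) *
          Complex.exp (Complex.I * (((2*(n:ℝ)-1)*α/2 : ℝ):ℂ)) := by
      rw [← Complex.exp_add]
      congr 1
      rw [hp_def]
      push_cast
      ring
    rw [hexp2]
    have hCneC : ((C:ℝ):ℂ) ≠ 0 := Complex.ofReal_ne_zero.mpr hC0.ne'
    have hEne : Complex.exp (((α:ℝ):ℂ)*Complex.I) ≠ 0 := Complex.exp_ne_zero _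
    rw [mul_inv, mul_inv, Complex.inv_I]
    push_cast
    field_simp
  rw [hval, hfinal] at hmain
  refine Tendsto.congr' ?_ hmain
  filter_upwards [eventually_gt_atTop 0] with τ hτ
  have hτC : ((τ:ℝ):ℂ) ≠ 0 := Complex.ofReal_ne_zero.mpr hτ.ne'
  have hτp : (0:ℝ) < τ ^ p := Real.rpow_pos_of_pos hτ p
  have hτpC : ((τ ^ p : ℝ):ℂ) ≠ 0 := Complex.ofReal_ne_zero.mpr hτp.ne'
  set G : ℝ → ℂ := fun r => ((r ^ p : ℝ):ℂ) * (((r:ℂ) - b)^2)⁻¹ *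
      Complex.exp (Complex.I * ↑τ * ↑r / (b * ((r:ℂ) - b))) with hG_def
  have hq : τ ^ ((2*(n:ℝ)+1)/2) = τ ^ p * τ := by
    rw [show (2*(n:ℝ)+1)/2 = p+1 by rw [hp_def]; ring, Real.rpow_add_one hτ.ne']
  have hKGu : ∀ u ∈ Ioo (0:ℝ) (τ*η'), K τ u = ((τ ^ p : ℝ):ℂ) * G (u/τ) := by
    intro u hu
    have hu0 : 0 < u := hu.1
    have hfac : ((u ^ p : ℝ):ℂ) = ((τ^p : ℝ):ℂ) * (((u/τ)^p : ℝ):ℂ) := by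
      rw [← Complex.ofReal_mul]
      congr 1
      rw [Real.div_rpow hu0.le hτ.le]
      field_simp
    have hargeq : Complex.I * (τ:ℂ) * (((u/τ:ℝ)):ℂ) / (b * ((((u/τ:ℝ)):ℂ) - b))
        = Complex.I * (u:ℂ) / (b * ((((u/τ:ℝ)):ℂ) - b)) := by
      have h8 : Complex.I * (τ:ℂ) * (((u/τ:ℝ)):ℂ) = Complex.I * (u:ℂ) := by
        push_cast
        field_simp
      rw [h8]
    simp only [hK_def, hG_def]
    rw [hargeq, hfac]
    ring
  have hcv : ∫ u in Ioo (0:ℝ) (τ*η'), G (u/τ) = τ • ∫ r in Ioo (0:ℝ) η', G r := by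
    have h := intervalIntegral.integral_comp_div (a := (0:ℝ)) (b := τ*η') (c := τ) (f := G)
      hτ.ne'
    rw [zero_div, mul_div_cancel_left₀ _ hτ.ne'] at h
    rw [intervalIntegral.integral_of_le (by positivity : (0:ℝ) ≤ τ*η'),
      MeasureTheory.integral_Ioc_eq_integral_Ioo] at h
    rw [intervalIntegral.integral_of_le hη'.le,
      MeasureTheory.integral_Ioc_eq_integral_Ioo] at h
    exact h
  have hGF : ∫ r in Ioo (0:ℝ) η', G r = Complex.exp ((τ:ℂ)*Complex.I/b) *
      ∫ r in Ioo (0:ℝ) η', ((r ^ p : ℝ):ℂ) * (((r:ℂ) - b)^2)⁻¹ *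
        Complex.exp (Complex.I * ↑τ / ((r:ℂ) - b)) := by
    rw [← MeasureTheory.integral_const_mul]
    apply setIntegral_congr_fun measurableSet_Ioo
    intro r _
    exact (hcomb τ r).symm
  calc ∫ u in Ioi (0:ℝ), (Ioo (0:ℝ) (τ*η')).indicator (K τ) u
      = ∫ u in Ioo (0:ℝ) (τ*η'), K τ u := by
        rw [setIntegral_indicator measurableSet_Ioo,
          inter_eq_self_of_subset_right Ioo_subset_Ioi_self]
    _ = ∫ u in Ioo (0:ℝ) (τ*η'), ((τ ^ p : ℝ):ℂ) * G (u/τ) :=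
        setIntegral_congr_fun measurableSet_Ioo hKGu
    _ = ((τ ^ p : ℝ):ℂ) * ∫ u in Ioo (0:ℝ) (τ*η'), G (u/τ) :=
        MeasureTheory.integral_const_mul _ _
    _ = ((τ ^ p : ℝ):ℂ) * ((τ:ℂ) * (Complex.exp ((τ:ℂ)*Complex.I/b) *
        ∫ r in Ioo (0:ℝ) η', ((r ^ p : ℝ):ℂ) * (((r:ℂ) - b)^2)⁻¹ *
          Complex.exp (Complex.I * ↑τ / ((r:ℂ) - b)))) := by
        rw [hcv, hGF, Complex.real_smul]
    _ = _ := by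
        rw [hq, Complex.ofReal_mul, Complex.ofReal_mul]
        linear_combination (-(((τ ^ p : ℝ):ℂ) * (τ:ℂ) *
          (∫ r in Ioo (0:ℝ) η', ((r ^ p : ℝ):ℂ) * (((r:ℂ) - b)^2)⁻¹ *
            Complex.exp (Complex.I * ↑τ / ((r:ℂ) - b))))) * hpre τ
end

section
/- Let s₀ > 0, α ∈ ℝ, and z ∈ ℂ with z ≠ s₀·conj(z_α). Then Re( i/(z − s₀·conj(z_α)) ) − 1/(2s₀) = −( |z|² + 2 s₀ · Re( z e^{−iα} ) ) / ( 2 s₀ |z − s₀·conj(z_α)|² ). In particular, writing z = η e^{iγ} with η ≥ 0 and γ ∈ ℝ, the right-hand side equals −η(η + 2 s₀ cos(γ−α)) / (2 s₀ |z − s₀·conj(z_α)|²). -/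
open Real

theorem stmt_6 (s₀ : ℝ) (hs₀ : 0 < s₀) (α : ℝ) (z : ℂ) (hz : z ≠ (s₀ : ℂ) * zbar α) :
    (Complex.I / (z - (s₀ : ℂ) * zbar α)).re - 1/(2*s₀) =
      -((‖z‖ ^ 2 + 2 * s₀ * (z * Complex.exp (-Complex.I * (α : ℂ))).re) /
        (2 * s₀ * ‖z - (s₀ : ℂ) * zbar α‖ ^ 2)) ∧
    ∀ η γ : ℝ, 0 ≤ η → z = (η : ℂ) * Complex.exp (Complex.I * (γ : ℂ)) →
      -((‖z‖ ^ 2 + 2 * s₀ * (z * Complex.exp (-Complex.I * (α : ℂ))).re) /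
        (2 * s₀ * ‖z - (s₀ : ℂ) * zbar α‖ ^ 2)) =
      -(η * (η + 2 * s₀ * Real.cos (γ - α)) /
        (2 * s₀ * ‖z - (s₀ : ℂ) * zbar α‖ ^ 2)) := by
  have hw : z - (s₀ : ℂ) * zbar α ≠ 0 := sub_ne_zero.mpr hz
  have hexp : Complex.exp (-Complex.I * (α : ℂ)) =
      ((Real.cos α : ℝ) : ℂ) - ((Real.sin α : ℝ) : ℂ) * Complex.I := by
    have h : -Complex.I * (α : ℂ) = ((-α : ℝ) : ℂ) * Complex.I := by push_cast; ring
    rw [h, Complex.exp_mul_I, ← Complex.ofReal_cos, ← Complex.ofReal_sin]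
    push_cast [Real.cos_neg, Real.sin_neg]
    ring
  have hsc := Real.sin_sq_add_cos_sq α
  have hre : (z - (s₀ : ℂ) * zbar α).re = z.re + s₀ * Real.cos α := by
    simp only [zbar, map_add, map_neg, Complex.conj_ofReal, map_mul, Complex.conj_I,
      Complex.sub_re, Complex.mul_re, Complex.mul_im, Complex.ofReal_re, Complex.ofReal_im,
      Complex.neg_re, Complex.neg_im, Complex.add_re, Complex.add_im, Complex.I_re,
      Complex.I_im]
    ring
  have him : (z - (s₀ : ℂ) * zbar α).im = z.im + s₀ * (1 + Real.sin α) := by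
    simp only [zbar, map_add, map_neg, Complex.conj_ofReal, map_mul, Complex.conj_I,
      Complex.sub_im, Complex.mul_re, Complex.mul_im, Complex.ofReal_re, Complex.ofReal_im,
      Complex.neg_re, Complex.neg_im, Complex.add_re, Complex.add_im, Complex.I_re,
      Complex.I_im]
    ring
  have hD : Complex.normSq (z - (s₀ : ℂ) * zbar α) =
      (z.re + s₀ * Real.cos α) ^ 2 + (z.im + s₀ * (1 + Real.sin α)) ^ 2 := by
    rw [Complex.normSq_apply, hre, him]; ring
  have hDne : (z.re + s₀ * Real.cos α) ^ 2 + (z.im + s₀ * (1 + Real.sin α)) ^ 2 ≠ 0 := by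
    rw [← hD]; simpa [Complex.normSq_eq_zero] using hw
  constructor
  · rw [Complex.div_re, Complex.sq_norm z, Complex.sq_norm (z - (s₀:ℂ)*zbar α), hexp,
      hD, hre, him, Complex.normSq_apply]
    simp only [Complex.I_re, Complex.I_im, Complex.mul_re, Complex.sub_re, Complex.sub_im,
      Complex.ofReal_re, Complex.ofReal_im, Complex.mul_im]
    field_simp
    linear_combination (-2 * s₀ * ((z.re + s₀ * Real.cos α) ^ 2 +
      (z.im + s₀ * (1 + Real.sin α)) ^ 2)) * s₀ ^ 2 * hsc + (-s₀ ^ 2 + 2 * s₀ ^ 3 * z.re ^ 2 + 2 * s₀ ^ 3 * z.im ^ 2 + 4 * s₀ ^ 4 * z.re * Real.cos α + 4 * s₀ ^ 4 * z.im * (1 + Real.sin α) + 2 * s₀ ^ 5 * (Real.sin α ^ 2 + Real.cos α ^ 2 + 1 + 2 * Real.sin α)) * hsc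
  · intro η γ hη hzeq
    congr 2
    rw [hzeq, hexp]
    have hγ : Complex.I * (γ : ℂ) = ((γ : ℝ) : ℂ) * Complex.I := by ring
    rw [hγ, norm_mul, Complex.norm_exp_ofReal_mul_I, Complex.norm_real, Real.norm_eq_abs, abs_of_nonneg hη,
      mul_one, Complex.exp_mul_I, ← Complex.ofReal_cos, ← Complex.ofReal_sin]
    simp only [Complex.mul_re, Complex.add_re, Complex.sub_re, Complex.mul_im, Complex.add_im,
      Complex.sub_im, Complex.ofReal_re, Complex.ofReal_im, Complex.I_re, Complex.I_im]
    rw [Real.cos_sub]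
    ring
end

section
/- Let s₀ > 0, α, γ ∈ ℝ with |γ − α| ≤ π/2, and η > 0, and set z = η e^{iγ}; assume z ≠ s₀·conj(z_α). Then Re( i/(z − s₀·conj(z_α)) ) − 1/(2s₀) ≤ −η² / ( 2 s₀ (η + 2s₀)² ). -/
open Real

theorem stmt_7 (s₀ : ℝ) (hs₀ : 0 < s₀) (α γ : ℝ) (hγα : |γ - α| ≤ π/2)
    (η : ℝ) (hη : 0 < η) (z : ℂ) (hzdef : z = (η : ℂ) * Complex.exp (Complex.I * (γ : ℂ)))
    (hz : z ≠ (s₀ : ℂ) * zbar α) :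
    (Complex.I / (z - (s₀ : ℂ) * zbar α)).re - 1/(2*s₀) ≤
      -(η^2 / (2 * s₀ * (η + 2*s₀)^2)) := by
  set w : ℂ := z - (s₀ : ℂ) * zbar α with hw
  have hwne : w ≠ 0 := sub_ne_zero.mpr hz
  have hzre : z.re = η * Real.cos γ := by
    rw [hzdef, mul_comm Complex.I, Complex.exp_mul_I]
    simp [Complex.cos_ofReal_re]
  have hzim : z.im = η * Real.sin γ := by
    rw [hzdef, mul_comm Complex.I, Complex.exp_mul_I]
    simp [Complex.sin_ofReal_re]
  have hwre : w.re = η * Real.cos γ + s₀ * Real.cos α := by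
    simp [hw, zbar, hzre, Complex.cos_ofReal_re]
  have hwim : w.im = η * Real.sin γ + s₀ * (1 + Real.sin α) := by
    simp [hw, zbar, hzim, Complex.sin_ofReal_re]; ring
  have hre : (Complex.I / w).re = w.im / Complex.normSq w := by
    simp [Complex.div_re]
  have hD : 0 < Complex.normSq w := Complex.normSq_pos.mpr hwne
  have hDval : Complex.normSq w = w.re ^ 2 + w.im ^ 2 := by
    rw [Complex.normSq_apply]; ring
  have hcos : 0 ≤ Real.cos (γ - α) := by
    rcases abs_le.mp hγα with ⟨h1, h2⟩
    exact Real.cos_nonneg_of_mem_Icc ⟨by linarith, h2⟩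
  have hcos' : 0 ≤ Real.cos γ * Real.cos α + Real.sin γ * Real.sin α := by
    rw [← Real.cos_sub]; exact hcos
  have hc1' : Real.cos γ * Real.cos α + Real.sin γ * Real.sin α ≤ 1 := by
    rw [← Real.cos_sub]; exact Real.cos_le_one _
  have hpyγ : Real.sin γ ^ 2 + Real.cos γ ^ 2 = 1 := Real.sin_sq_add_cos_sq γ
  have hpyα : Real.sin α ^ 2 + Real.cos α ^ 2 = 1 := Real.sin_sq_add_cos_sq α
  have e1 : Complex.normSq w - 2 * s₀ * w.im
      = η ^ 2 + 2 * η * s₀ * (Real.cos γ * Real.cos α + Real.sin γ * Real.sin α) := by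
    rw [hDval, hwre, hwim]
    linear_combination η ^ 2 * hpyγ + s₀ ^ 2 * hpyα
  have h1 : η ^ 2 ≤ Complex.normSq w - 2 * s₀ * w.im := by
    rw [e1]
    nlinarith [mul_nonneg (mul_nonneg hη.le hs₀.le) hcos']
  have e2 : Complex.normSq w = η ^ 2
      + 2 * η * s₀ * (Real.cos γ * Real.cos α + Real.sin γ * Real.sin α + Real.sin γ)
      + s₀ ^ 2 * (2 + 2 * Real.sin α) := by
    rw [hDval, hwre, hwim]
    linear_combination η ^ 2 * hpyγ + s₀ ^ 2 * hpyα
  have h2 : Complex.normSq w ≤ (η + 2 * s₀) ^ 2 := by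
    rw [e2]
    have hs1 : Real.sin γ ≤ 1 := Real.sin_le_one _
    have hs2 : Real.sin α ≤ 1 := Real.sin_le_one _
    nlinarith [mul_pos hη hs₀, mul_pos hs₀ hs₀]
  rw [hre, ← sub_nonneg]
  have hrw : -(η ^ 2 / (2 * s₀ * (η + 2 * s₀) ^ 2)) - (w.im / Complex.normSq w - 1 / (2 * s₀))
      = ((Complex.normSq w - 2 * s₀ * w.im - η ^ 2) * (η + 2 * s₀) ^ 2
          + η ^ 2 * ((η + 2 * s₀) ^ 2 - Complex.normSq w))
        / (2 * s₀ * Complex.normSq w * (η + 2 * s₀) ^ 2) := by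
    have hE : (0:ℝ) < (η + 2 * s₀) ^ 2 := by positivity
    field_simp
    ring
  rw [hrw]
  apply div_nonneg _ (by positivity)
  have t1 : 0 ≤ Complex.normSq w - 2 * s₀ * w.im - η ^ 2 := by linarith
  have t2 : 0 ≤ (η + 2 * s₀) ^ 2 - Complex.normSq w := by linarith
  exact add_nonneg (mul_nonneg t1 (by positivity)) (mul_nonneg (by positivity) t2)
end

section
/- Let ξ ∈ ℝ², s > 0, and x ∈ ℝ² with |x − (ξ − s e₂)| > s (so in particular x ≠ ξ). Then e^{−τ/(2s)} · v_τ(x;ξ) → 0 as τ → ∞. -/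
open Real Filter

/-- The probing function `v_τ(x;ξ) = exp(-τ((x₂-ξ₂)+i(x₁-ξ₁))/|x-ξ|²)`. -/
noncomputable def vprobe (τ ξ₁ ξ₂ x₁ x₂ : ℝ) : ℂ :=
  Complex.exp (-(τ : ℂ) * (((x₂ - ξ₂ : ℝ) : ℂ) + Complex.I * ((x₁ - ξ₁ : ℝ) : ℂ)) /
    (((x₁ - ξ₁)^2 + (x₂ - ξ₂)^2 : ℝ) : ℂ))

theorem stmt_11 (ξ₁ ξ₂ : ℝ) (s : ℝ) (hs : 0 < s) (x₁ x₂ : ℝ)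
    (hx : s < Real.sqrt ((x₁ - ξ₁)^2 + (x₂ - (ξ₂ - s))^2)) :
    Tendsto (fun τ : ℝ => ((Real.exp (-τ/(2*s)) : ℝ) : ℂ) * vprobe τ ξ₁ ξ₂ x₁ x₂)
      atTop (nhds 0) := by
  have hsq0 : s^2 < (x₁ - ξ₁)^2 + ((x₂ - ξ₂) + s)^2 := by
    have h0 : (0:ℝ) ≤ (x₁ - ξ₁)^2 + (x₂ - (ξ₂ - s))^2 := by positivity
    have := Real.sq_sqrt h0
    nlinarith [Real.sqrt_nonneg ((x₁ - ξ₁)^2 + (x₂ - (ξ₂ - s))^2), hs]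
  set a := x₁ - ξ₁ with ha
  set b := x₂ - ξ₂ with hb
  have hsq : s^2 < a^2 + (b + s)^2 := hsq0
  have hkey : 0 < a^2 + b^2 + 2*s*b := by nlinarith
  have hr : 0 < a^2 + b^2 := by
    rcases lt_or_eq_of_le (by positivity : (0:ℝ) ≤ a^2 + b^2) with h | h
    · exact h
    · exfalso
      have ha0 : a = 0 := by nlinarith [sq_nonneg a, sq_nonneg b]
      have hb0 : b = 0 := by nlinarith [sq_nonneg a, sq_nonneg b]
      rw [ha0, hb0] at hkey; simp at hkey
  set r := a^2 + b^2 with hrdef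
  set c := 1/(2*s) + b/r with hcdef
  have hc : 0 < c := by
    rw [hcdef]
    have : 1/(2*s) + b/r = (r + 2*s*b) / (2*s*r) := by field_simp
    rw [this]
    apply div_pos (by nlinarith) (by positivity)
  rw [tendsto_zero_iff_norm_tendsto_zero]
  have heq : ∀ τ : ℝ, ‖((Real.exp (-τ/(2*s)) : ℝ) : ℂ) * vprobe τ ξ₁ ξ₂ x₁ x₂‖
      = Real.exp (-(c * τ)) := by
    intro τ
    unfold vprobe
    rw [norm_mul, Complex.norm_real, Real.norm_eq_abs,
      abs_of_pos (Real.exp_pos _), Complex.norm_exp, ← Real.exp_add]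
    congr 1
    have hre : ((-(τ:ℂ) * (((x₂ - ξ₂ : ℝ) : ℂ) + Complex.I * ((x₁ - ξ₁ : ℝ) : ℂ)) /
        (((x₁ - ξ₁)^2 + (x₂ - ξ₂)^2 : ℝ) : ℂ)).re) = (-τ * b) / r := by
      rw [Complex.div_ofReal_re]
      simp [Complex.mul_re, ← ha, ← hb, ← hrdef]
    rw [hre, hcdef]
    field_simp
    ring
  simp only [heq]
  exact Real.tendsto_exp_atBot.comp
    (tendsto_neg_atTop_atBot.comp ((tendsto_const_mul_atTop_of_pos hc).mpr tendsto_id))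
end

section
/- Let ξ ∈ ℝ², s > 0, and x ∈ ℝ² with x ≠ ξ and |x − (ξ − s e₂)| < s. Then | e^{−τ/(2s)} · v_τ(x;ξ) | → ∞ as τ → ∞. -/
open Real Filter

theorem stmt_12 (ξ₁ ξ₂ : ℝ) (s : ℝ) (hs : 0 < s) (x₁ x₂ : ℝ)
    (hx : (x₁, x₂) ≠ (ξ₁, ξ₂))
    (hx' : Real.sqrt ((x₁ - ξ₁)^2 + (x₂ - (ξ₂ - s))^2) < s) :
    Tendsto (fun τ : ℝ => ‖((Real.exp (-τ/(2*s)) : ℝ) : ℂ) * vprobe τ ξ₁ ξ₂ x₁ x₂‖)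
      atTop atTop := by
  set a := x₁ - ξ₁ with ha
  set b := x₂ - ξ₂ with hb
  have hne : a ≠ 0 ∨ b ≠ 0 := by
    by_contra h
    push_neg at h
    obtain ⟨h1, h2⟩ := h
    apply hx
    have e1 := sub_eq_zero.mp h1
    have e2 := sub_eq_zero.mp h2
    rw [Prod.mk.injEq]
    exact ⟨e1, e2⟩
  have hr2 : 0 < a^2 + b^2 := by
    rcases hne with h | h
    · nlinarith [sq_nonneg b, sq_pos_of_ne_zero h]
    · nlinarith [sq_nonneg a, sq_pos_of_ne_zero h]
  have hsq : a^2 + (x₂ - (ξ₂ - s))^2 < s^2 := by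
    have := (Real.sqrt_lt' hs).mp hx'
    simpa [ha] using this
  have hexp : (x₂ - (ξ₂ - s))^2 = b^2 + 2*s*b + s^2 := by rw [hb]; ring
  have hkey : a^2 + b^2 + 2*s*b < 0 := by
    rw [hexp] at hsq; linarith
  set c : ℝ := -(1/(2*s)) - b/(a^2+b^2) with hc
  have hcpos : 0 < c := by
    have : c = (-(a^2+b^2) - 2*s*b) / (2*s*(a^2+b^2)) := by
      rw [hc]
      field_simp [hc]
      try ring
    rw [this]
    apply div_pos (by linarith) (by positivity)
  have habs : ∀ τ : ℝ,
      ‖((Real.exp (-τ/(2*s)) : ℝ) : ℂ) * vprobe τ ξ₁ ξ₂ x₁ x₂‖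
        = Real.exp (τ * c) := by
    intro τ
    rw [norm_mul, Complex.norm_real, Real.norm_eq_abs, abs_of_pos (Real.exp_pos _)]
    have : vprobe τ ξ₁ ξ₂ x₁ x₂
        = Complex.exp (((-τ * b / (a^2+b^2) : ℝ) : ℂ) + Complex.I * ((-τ * a / (a^2+b^2) : ℝ) : ℂ)) := by
      unfold vprobe
      congr 1
      have hr2' : ((a^2+b^2 : ℝ) : ℂ) ≠ 0 := by
        exact_mod_cast (ne_of_gt hr2)
      simp only [ha, hb] at hr2' ⊢
      push_cast
      field_simp
      ring
    rw [this]
    rw [Complex.norm_exp]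
    simp only [Complex.add_re, Complex.ofReal_re, Complex.mul_re, Complex.I_re, Complex.I_im,
      Complex.ofReal_im]
    rw [← Real.exp_add]
    congr 1
    rw [hc]
    field_simp
    try ring
  refine Tendsto.congr (fun τ => (habs τ).symm) ?_
  exact Real.tendsto_exp_atTop.comp (Tendsto.atTop_mul_const hcpos tendsto_id)
end

section
/- Let ξ ∈ ℝ², s > 0, τ ∈ ℝ, and x ∈ ℝ² with x ≠ ξ and |x − (ξ − s e₂)| = s. Then | e^{−τ/(2s)} · v_τ(x;ξ) | = 1. -/
open Real

theorem stmt_13 (ξ₁ ξ₂ : ℝ) (s : ℝ) (hs : 0 < s) (τ : ℝ) (x₁ x₂ : ℝ)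
    (hx : (x₁, x₂) ≠ (ξ₁, ξ₂))
    (hx' : Real.sqrt ((x₁ - ξ₁)^2 + (x₂ - (ξ₂ - s))^2) = s) :
    ‖((Real.exp (-τ/(2*s)) : ℝ) : ℂ) * vprobe τ ξ₁ ξ₂ x₁ x₂‖ = 1 := by
  set R : ℝ := (x₁ - ξ₁)^2 + (x₂ - ξ₂)^2 with hRdef
  have ha : R ≠ 0 := by
    intro h
    apply hx
    have h1 : x₁ - ξ₁ = 0 := by nlinarith [sq_nonneg (x₁ - ξ₁), sq_nonneg (x₂ - ξ₂)]
    have h2 : x₂ - ξ₂ = 0 := by nlinarith [sq_nonneg (x₁ - ξ₁), sq_nonneg (x₂ - ξ₂)]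
    have : x₁ = ξ₁ := by linarith
    have : x₂ = ξ₂ := by linarith
    simp_all
  have hRpos : 0 < R := lt_of_le_of_ne (by positivity) (Ne.symm ha)
  have hsq : (x₁ - ξ₁)^2 + (x₂ - (ξ₂ - s))^2 = s^2 := by
    have := congrArg (· ^ 2) hx'
    simpa [Real.sq_sqrt (by positivity : (0:ℝ) ≤ (x₁ - ξ₁)^2 + (x₂ - (ξ₂ - s))^2)] using this
  have hR : R = -2 * s * (x₂ - ξ₂) := by rw [hRdef]; nlinarith
  have hne : x₂ - ξ₂ ≠ 0 := by
    intro h; rw [hR, h] at hRpos; simp at hRpos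
  rw [norm_mul, Complex.norm_real, Real.norm_eq_abs, abs_of_pos (Real.exp_pos _)]
  unfold vprobe
  rw [Complex.norm_exp]
  have hz : -(τ : ℂ) * (((x₂ - ξ₂ : ℝ) : ℂ) + Complex.I * ((x₁ - ξ₁ : ℝ) : ℂ)) /
      ((R : ℝ) : ℂ)
      = (((-τ * (x₂ - ξ₂) / R : ℝ)) : ℂ) + (((-τ * (x₁ - ξ₁) / R : ℝ)) : ℂ) * Complex.I := by
    have hRc : ((R : ℝ) : ℂ) ≠ 0 := by exact_mod_cast ha
    field_simp
    push_cast
    field_simp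
    ring
  rw [hz]
  have hre : ((((-τ * (x₂ - ξ₂) / R : ℝ)) : ℂ) + (((-τ * (x₁ - ξ₁) / R : ℝ)) : ℂ) * Complex.I).re
      = -τ * (x₂ - ξ₂) / R := by simp
  rw [hre]
  have : -τ * (x₂ - ξ₂) / R = τ / (2 * s) := by
    rw [hR]; field_simp
  rw [this, ← Real.exp_add]
  rw [show -τ / (2 * s) + τ / (2 * s) = 0 by ring, Real.exp_zero]
end

section
/- Let m ≥ 1 be an integer, a > 0, c ∈ ℝ, and 0 = c₀ < c₁ < ⋯ < c_{2m} < c_{2m+1} = a. In the Euclidean plane define the crack set Σ := ⋃_{j=0}^{m} [c_{2j}, c_{2j+1}] × {c}. Let ξ = (ξ₁, ξ₂) with ξ₂ > c, and suppose that for some j ∈ {1,…,m} one has c_{2j−1} ≤ ξ₁ ≤ (c_{2j−1}+c_{2j})/2. Then sup{ s > 0 : the open Euclidean ball B_s(ξ − s e₂) of radius s centered at ξ − s e₂ is disjoint from Σ } = ( (ξ₁ − c_{2j−1})² + (ξ₂ − c)² ) / ( 2(ξ₂ − c) ). -/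
open Real

/-- The point `(x, y)` of the Euclidean plane. -/
noncomputable def pt (x y : ℝ) : EuclideanSpace ℝ (Fin 2) :=
  (WithLp.equiv 2 (Fin 2 → ℝ)).symm ![x, y]

lemma dist_pt (x y x' y' : ℝ) :
    dist (pt x y) (pt x' y') = Real.sqrt ((x - x')^2 + (y - y')^2) := by
  rw [EuclideanSpace.dist_eq]
  simp [pt, Fin.sum_univ_two, Real.dist_eq, sq_abs]

lemma cs_mono (cs : ℕ → ℝ) (N : ℕ) (hmono : ∀ i, i < N → cs i < cs (i+1)) :
    ∀ p q, p ≤ q → q ≤ N → cs p ≤ cs q := by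
  intro p q hpq hq
  induction q with
  | zero => simp [Nat.le_zero.mp hpq]
  | succ n ih =>
    rcases Nat.lt_or_ge p (n+1) with h | h
    · exact le_trans (ih (Nat.lt_succ_iff.mp h) (by omega)) (le_of_lt (hmono n (by omega)))
    · have : p = n+1 := le_antisymm hpq h
      simp [this]

set_option maxHeartbeats 1600000 in
/-- explicit formula for `s_Σ(ξ)` (left-half case over a joined segment). -/
theorem stmt_16 (m : ℕ) (hm : 1 ≤ m) (a c : ℝ) (ha : 0 < a)
    (cs : ℕ → ℝ) (hc0 : cs 0 = 0) (hclast : cs (2*m+1) = a)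
    (hmono : ∀ i, i < 2*m+1 → cs i < cs (i+1))
    (ξ₁ ξ₂ : ℝ) (hξ₂ : c < ξ₂)
    (j : ℕ) (hj1 : 1 ≤ j) (hj2 : j ≤ m)
    (hξ₁l : cs (2*j-1) ≤ ξ₁) (hξ₁r : ξ₁ ≤ (cs (2*j-1) + cs (2*j))/2) :
    sSup {s : ℝ | 0 < s ∧ Disjoint (Metric.ball (pt ξ₁ (ξ₂ - s)) s)
        (⋃ i ∈ Finset.range (m+1), (fun t : ℝ => pt t c) '' Set.Icc (cs (2*i)) (cs (2*i+1)))} =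
      ((ξ₁ - cs (2*j-1))^2 + (ξ₂ - c)^2) / (2*(ξ₂ - c)) := by
  obtain ⟨j', rfl⟩ : ∃ j', j = j' + 1 := ⟨j - 1, (Nat.succ_pred_eq_of_pos hj1).symm⟩
  have hidx : 2 * (j' + 1) - 1 = 2 * j' + 1 := by omega
  rw [hidx] at hξ₁l hξ₁r ⊢
  set h : ℝ := ξ₂ - c with hh
  set d : ℝ := ξ₁ - cs (2*j'+1) with hd
  have hhpos : 0 < h := by simp [hh]; linarith
  have hdpos : 0 ≤ d := by simp [hd]; linarith
  set S : ℝ := (d^2 + h^2) / (2*h) with hS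
  have hSpos : 0 < S := by positivity
  clear_value S d h
  have hset : {s : ℝ | 0 < s ∧ Disjoint (Metric.ball (pt ξ₁ (ξ₂ - s)) s)
        (⋃ i ∈ Finset.range (m+1), (fun t : ℝ => pt t c) '' Set.Icc (cs (2*i)) (cs (2*i+1)))}
      = Set.Ioc 0 S := by
    ext s
    simp only [Set.mem_setOf_eq, Set.mem_Ioc]
    constructor
    · rintro ⟨hs, hdisj⟩
      refine ⟨hs, ?_⟩
      have hpS : pt (cs (2*j'+1)) c ∈
          ⋃ i ∈ Finset.range (m+1), (fun t : ℝ => pt t c) '' Set.Icc (cs (2*i)) (cs (2*i+1)) := by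
        refine Set.mem_biUnion (show j' ∈ Finset.range (m+1) from Finset.mem_range.mpr (by omega)) ?_
        exact ⟨cs (2*j'+1), ⟨le_of_lt (hmono (2*j') (by omega)), le_refl _⟩, rfl⟩
      have hnot : pt (cs (2*j'+1)) c ∉ Metric.ball (pt ξ₁ (ξ₂ - s)) s :=
        Set.disjoint_right.mp hdisj hpS
      have hdist : s ≤ dist (pt (cs (2*j'+1)) c) (pt ξ₁ (ξ₂ - s)) := by
        by_contra hlt
        exact hnot (Metric.mem_ball.mpr (by linarith [not_le.mp hlt]))
      rw [dist_pt] at hdist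
      have hsq : s^2 ≤ (cs (2*j'+1) - ξ₁)^2 + (c - (ξ₂ - s))^2 := by
        have h1 : 0 ≤ (cs (2*j'+1) - ξ₁)^2 + (c - (ξ₂ - s))^2 := by positivity
        nlinarith [Real.sq_sqrt h1, Real.sqrt_nonneg ((cs (2*j'+1) - ξ₁)^2 + (c - (ξ₂ - s))^2)]
      rw [hS, le_div_iff₀ (by positivity)]
      have hexp : (cs (2*j'+1) - ξ₁)^2 = d^2 := by rw [hd]; ring
      have hexp2 : (c - (ξ₂ - s))^2 = (h - s)^2 := by rw [hh]; ring
      nlinarith [hsq]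
    · rintro ⟨hs, hle⟩
      refine ⟨hs, ?_⟩
      rw [Set.disjoint_left]
      rintro q hq hqS
      simp only [Set.mem_iUnion, Set.mem_image] at hqS
      obtain ⟨i, hi, t, ⟨ht1, ht2⟩, rfl⟩ := hqS
      have him : i ≤ m := by
        have := Finset.mem_range.mp hi; omega
      rw [Metric.mem_ball, dist_pt] at hq
      have habs : d^2 ≤ (t - ξ₁)^2 := by
        rcases le_or_gt i j' with hij | hij
        · have ht : t ≤ cs (2*j'+1) :=
            le_trans ht2 (cs_mono cs (2*m+1) hmono (2*i+1) (2*j'+1) (by omega) (by omega))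
          nlinarith [hξ₁l]
        · have ht : cs (2*(j'+1)) ≤ t :=
            le_trans (cs_mono cs (2*m+1) hmono (2*(j'+1)) (2*i) (by omega) (by omega)) ht1
          have : d ≤ t - ξ₁ := by
            have : ξ₁ - cs (2*j'+1) ≤ cs (2*(j'+1)) - ξ₁ := by linarith [hξ₁r]
            rw [hd]; linarith
          nlinarith
      have hsq : s^2 ≤ (t - ξ₁)^2 + (c - (ξ₂ - s))^2 := by
        have h1 : s * (2*h) ≤ d^2 + h^2 := by
          rw [hS, le_div_iff₀ (by positivity)] at hle; linarith
        have hexp2 : (c - (ξ₂ - s))^2 = (h - s)^2 := by rw [hh]; ring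
        have key : s^2 ≤ d^2 + (h - s)^2 := by nlinarith [h1]
        rw [hexp2]
        linarith [habs, key]
      have : s ≤ Real.sqrt ((t - ξ₁)^2 + (c - (ξ₂ - s))^2) :=
        Real.le_sqrt' hs |>.mpr hsq
      linarith
  rw [hset, csSup_Ioc hSpos]
end
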